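/- Let $R = \mathbb{C}[[z]]$ and let $P \in \mathrm{Mat}_n(\mathbb{C}[z])$ be lower triangular with monic diagonal entries $p_j$ of degree $d_j$ all of whose roots are $0$ (i.e. $p_j = z^{d_j}$), and strictly-lower entries of degree $\le d_j - 1$ in row $j$. Then the $\mathbb{C}$-vector space of polar tails $T := \{\text{principal part at } z=0 \text{ of } \mathbf{v}^t P^{-1} : \mathbf{v} \in \mathbb{C}[z]^n\}$ (row vectors of finite-tailed Laurent series with no nonnegative powers) has dimension exactly $\sum_{j=1}^n d_j = \deg \det P$, and is spanned by the principal parts of $z^k \mathbf{e}_j^t P^{-1}$ for $0 \le k \le d_j - 1$, $1 \le j \le n$. -/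

import Mathlib

open Polynomial

/-- The principal part of a formal Laurent series: keep only the coefficients
of strictly negative powers of `z`. -/
noncomputable def principalPart (f : LaurentSeries ℂ) : LaurentSeries ℂ where
  coeff n := if n < 0 then f.coeff n else 0
  isPWO_support' := by
    refine f.isPWO_support'.mono ?_
    intro n hn
    by_cases hneg : n < 0
    · simpa [Function.mem_support, hneg] using hn
    · simp [Function.mem_support, hneg] at hn

/-- The natural ring homomorphism `ℂ[z] →+* ℂ((z))`. -/
noncomputable def polyToLaurent' : ℂ[X] →+* LaurentSeries ℂ :=
  (HahnSeries.ofPowerSeries ℤ ℂ).comp Polynomial.coeToPowerSeries.ringHom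

/-!
Let `Φ v` be the principal part of `vᵗ P⁻¹`. Since `(uᵗ P) P⁻¹ = uᵗ` is polynomial, `Φ` kills
every `uᵗ P`. Row `j` of `P` is `z ^ d j e_jᵗ` plus terms in the columns `l < j`, so by induction
on `j` every `Φ (z ^ m e_j)` with `m ≥ d j` is a combination of values `Φ (p e_l)` with `l < j`;
hence the `Φ (z ^ k e_j)` with `k < d j` span the range of `Φ`. Moreover `P⁻¹` is lower triangular
with diagonal `z ^ (-d j)`, so `Φ (z ^ k e_j)` vanishes after entry `j` and has entry `j` equal
to `z ^ (k - d j)`; this triangular shape makes these vectors linearly independent.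
-/

open Matrix

theorem principalPart_coeff (f : LaurentSeries ℂ) (m : ℤ) :
    (principalPart f).coeff m = if m < 0 then f.coeff m else 0 := rfl

theorem principalPart_zero : principalPart 0 = 0 := by
  ext m; simp [principalPart_coeff]

theorem principalPart_add (f g : LaurentSeries ℂ) :
    principalPart (f + g) = principalPart f + principalPart g := by
  ext m; simp only [principalPart_coeff, HahnSeries.coeff_add]; split_ifs <;> simp

theorem principalPart_C_mul (c : ℂ) (f : LaurentSeries ℂ) :
    principalPart (HahnSeries.C c * f) = c • principalPart f := by
  ext m
  simp only [HahnSeries.C_mul_eq_smul, principalPart_coeff, HahnSeries.coeff_smul]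
  split_ifs <;> simp

theorem principalPart_single (m : ℤ) (c : ℂ) :
    principalPart (HahnSeries.single m c) = if m < 0 then HahnSeries.single m c else 0 := by
  ext k
  rw [principalPart_coeff, HahnSeries.coeff_single]
  split_ifs <;> simp_all [HahnSeries.coeff_single]; omega

theorem principalPart_polyToLaurent' (p : ℂ[X]) : principalPart (polyToLaurent' p) = 0 := by
  ext m
  simp only [principalPart_coeff, polyToLaurent', RingHom.coe_comp, Function.comp_apply]
  split_ifs with hm
  · rw [coeToPowerSeries.ringHom_apply, PowerSeries.coeff_coe, if_pos hm, HahnSeries.coeff_zero]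
  · rfl

theorem polyToLaurent'_X_pow (k : ℕ) : polyToLaurent' (X ^ k) = HahnSeries.single (k : ℤ) 1 := by
  simp [polyToLaurent', HahnSeries.ofPowerSeries_X_pow]

theorem polyToLaurent'_smul (c : ℂ) (p : ℂ[X]) :
    polyToLaurent' (c • p) = HahnSeries.C c * polyToLaurent' p := by
  simp [smul_eq_C_mul, polyToLaurent', HahnSeries.ofPowerSeries_C]

theorem Matrix.IsLowerTriangular.inv {ι R : Type*} [Fintype ι] [DecidableEq ι] [LinearOrder ι]
    [CommRing R] {M : Matrix ι ι R} (hM : M.IsLowerTriangular) : M⁻¹.IsLowerTriangular := by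
  by_cases h : IsUnit M.det
  · have := M.invertibleOfIsUnitDet h
    exact blockTriangular_inv_of_blockTriangular hM
  · rw [nonsing_inv_apply_not_isUnit M h]
    exact fun _ _ _ => rfl

theorem Matrix.IsLowerTriangular.mul_inv_apply_self {ι R : Type*} [Fintype ι] [DecidableEq ι]
    [LinearOrder ι] [CommRing R] {M : Matrix ι ι R} (hM : M.IsLowerTriangular)
    (h : IsUnit M.det) (j : ι) : M j j * M⁻¹ j j = 1 := by
  rw [← one_apply_eq (α := R) j, ← mul_nonsing_inv M h, mul_apply,
    Finset.sum_eq_single_of_mem j (Finset.mem_univ j)]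
  intro i _ hij
  rcases lt_or_gt_of_ne hij with hlt | hgt
  · rw [hM.inv hlt, mul_zero]
  · rw [hM hgt, zero_mul]

section PolarTail

variable {ι : Type*} [Fintype ι]

/-- `v ↦ C_-[vᵗ B]`; for `B = P⁻¹` its range is the Tyurin space. -/
noncomputable def polarTailMap (B : Matrix ι ι (LaurentSeries ℂ)) :
    (ι → ℂ[X]) →ₗ[ℂ] (ι → LaurentSeries ℂ) where
  toFun v i := principalPart (((fun j => polyToLaurent' (v j)) ᵥ* B) i)
  map_add' v w := by
    funext i
    simp only [Pi.add_apply, map_add, ← principalPart_add]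
    exact congrArg principalPart (congrFun (add_vecMul B _ _) i)
  map_smul' c v := by
    have hsmul : (fun j => polyToLaurent' ((c • v) j))
        = (HahnSeries.C c : LaurentSeries ℂ) • fun j => polyToLaurent' (v j) :=
      funext fun j => by rw [Pi.smul_apply, Pi.smul_apply, smul_eq_mul, polyToLaurent'_smul]
    funext i
    change principalPart ((_ ᵥ* B) i) = c • principalPart ((_ ᵥ* B) i)
    rw [hsmul, smul_vecMul, Pi.smul_apply, smul_eq_mul, principalPart_C_mul]

theorem polarTailMap_apply (B : Matrix ι ι (LaurentSeries ℂ)) (v : ι → ℂ[X]) (i : ι) :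
    polarTailMap B v i = principalPart (((fun j => polyToLaurent' (v j)) ᵥ* B) i) :=
  rfl

variable [DecidableEq ι]

/-- The paper's `v_{d_1 + ⋯ + d_{j-1} + k}` when `B = P⁻¹`. -/
noncomputable def polarTailBasis (B : Matrix ι ι (LaurentSeries ℂ)) (d : ι → ℕ)
    (jk : (j : ι) × Fin (d j)) : ι → LaurentSeries ℂ :=
  polarTailMap B (Pi.single jk.1 (X ^ (jk.2 : ℕ)))

theorem polarTailMap_single_X_pow_apply (B : Matrix ι ι (LaurentSeries ℂ)) (j : ι) (k : ℕ)
    (i : ι) :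
    polarTailMap B (Pi.single j (X ^ k)) i
      = principalPart (HahnSeries.single (k : ℤ) 1 * B j i) := by
  have hsingle : (fun l => polyToLaurent' ((Pi.single j (X ^ k) : ι → ℂ[X]) l))
      = Pi.single j (polyToLaurent' (X ^ k)) :=
    funext fun l => by by_cases h : l = j <;> simp [h]
  rw [polarTailMap_apply, hsingle, single_vecMul, polyToLaurent'_X_pow]
  rfl

theorem polarTailMap_single_X_pow_apply_self {B : Matrix ι ι (LaurentSeries ℂ)} {j : ι}
    {e k : ℕ} (hB : B j j = HahnSeries.single (-(e : ℤ)) 1) (hk : k < e) :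
    polarTailMap B (Pi.single j (X ^ k)) j = HahnSeries.single ((k : ℤ) - e) 1 := by
  rw [polarTailMap_single_X_pow_apply, hB, HahnSeries.single_mul_single, mul_one,
    principalPart_single, if_pos (by omega), sub_eq_add_neg]

theorem polarTailMap_vecMul_self (P : Matrix ι ι ℂ[X]) (hP : IsUnit (P.map polyToLaurent').det)
    (u : ι → ℂ[X]) : polarTailMap (P.map polyToLaurent')⁻¹ (u ᵥ* P) = 0 := by
  funext i
  have hmap : (fun j => polyToLaurent' ((u ᵥ* P) j))
      = (fun j => polyToLaurent' (u j)) ᵥ* P.map polyToLaurent' :=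
    funext fun j => RingHom.map_vecMul _ _ _ _
  rw [polarTailMap_apply, hmap, vecMul_vecMul, mul_nonsing_inv _ hP, vecMul_one]
  exact principalPart_polyToLaurent' (u i)

variable [LinearOrder ι] {d : ι → ℕ}

theorem polarTailMap_single_X_pow_apply_of_lt {B : Matrix ι ι (LaurentSeries ℂ)}
    (hB : B.IsLowerTriangular) {i j : ι} (hji : j < i) (k : ℕ) :
    polarTailMap B (Pi.single j (X ^ k)) i = 0 := by
  rw [polarTailMap_single_X_pow_apply, hB hji, mul_zero, principalPart_zero]

theorem linearIndependent_polarTailBasis {B : Matrix ι ι (LaurentSeries ℂ)}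
    (hB : B.IsLowerTriangular) (hdiag : ∀ j, B j j = HahnSeries.single (-(d j : ℤ)) 1) :
    LinearIndependent ℂ (polarTailBasis B d) := by
  rw [Fintype.linearIndependent_iff]
  intro g hg
  suffices ∀ j k, g ⟨j, k⟩ = 0 from fun jk => this jk.1 jk.2
  intro j
  induction j using WellFoundedGT.induction with
  | _ j ih =>
  intro k
  -- The coefficient of `z ^ (k - d j)` in entry `j` isolates `g ⟨j, k⟩`.
  have h := congrArg (fun x => (x j).coeff ((k : ℤ) - d j)) hg
  simp only [Finset.sum_apply, Pi.smul_apply, HahnSeries.coeff_sum, HahnSeries.coeff_smul,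
    Pi.zero_apply, HahnSeries.coeff_zero, polarTailBasis] at h
  rw [Finset.sum_eq_single ⟨j, k⟩ ?_ (by simp),
    polarTailMap_single_X_pow_apply_self (hdiag j) k.isLt] at h
  · simpa using h
  rintro ⟨j', k'⟩ _ hne
  rcases lt_trichotomy j' j with hlt | rfl | hgt
  · simp [polarTailMap_single_X_pow_apply_of_lt hB hlt]
  · have hk : (k' : ℕ) ≠ k := fun h => hne (by rw [Fin.ext h])
    rw [polarTailMap_single_X_pow_apply_self (hdiag j') k'.isLt, HahnSeries.coeff_single,
      if_neg (by omega), smul_zero]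
  · simp [ih j' hgt k']

end PolarTail

section LowerTriangular

variable {ι : Type*} [LinearOrder ι] {P : Matrix ι ι ℂ[X]} {d : ι → ℕ}

theorem isLowerTriangular_map_polyToLaurent' (hP : P.IsLowerTriangular) :
    (P.map polyToLaurent').IsLowerTriangular := fun i j hij => by
  simp [hP hij]

variable [Fintype ι] [DecidableEq ι]

theorem isUnit_det_map_polyToLaurent' (hP : P.IsLowerTriangular)
    (hdiag : ∀ j, P j j = X ^ d j) : IsUnit (P.map polyToLaurent').det := by
  rw [det_of_isLowerTriangular _ (isLowerTriangular_map_polyToLaurent' hP), isUnit_iff_ne_zero,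
    Finset.prod_ne_zero_iff]
  intro j _
  simp [hdiag, polyToLaurent'_X_pow]

theorem inv_map_polyToLaurent'_apply_self (hP : P.IsLowerTriangular)
    (hdiag : ∀ j, P j j = X ^ d j) (j : ι) :
    (P.map polyToLaurent')⁻¹ j j = HahnSeries.single (-(d j : ℤ)) 1 := by
  have h := (isLowerTriangular_map_polyToLaurent' hP).mul_inv_apply_self
    (isUnit_det_map_polyToLaurent' hP hdiag) j
  rw [map_apply, hdiag, polyToLaurent'_X_pow] at h
  rw [eq_inv_of_mul_eq_one_right h, HahnSeries.inv_single, inv_one]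

theorem polarTailMap_single_mem_span (hP : P.IsLowerTriangular) (hdiag : ∀ j, P j j = X ^ d j)
    (j : ι) (p : ℂ[X]) :
    polarTailMap (P.map polyToLaurent')⁻¹ (Pi.single j p)
      ∈ Submodule.span ℂ (Set.range (polarTailBasis (P.map polyToLaurent')⁻¹ d)) := by
  set Φ := polarTailMap (P.map polyToLaurent')⁻¹
  induction j using WellFoundedLT.induction generalizing p with
  | _ j ih =>
  -- `Φ` kills `(c e_j)ᵗ P`, whose entry `j` is `c z ^ d j` and whose other entries sit at `l < j`.
  have hrow : ∀ c : ℂ[X], Φ (Pi.single j (c * X ^ d j))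
      ∈ Submodule.span ℂ (Set.range (polarTailBasis (P.map polyToLaurent')⁻¹ d)) := by
    intro c
    have h0 := polarTailMap_vecMul_self P (isUnit_det_map_polyToLaurent' hP hdiag) (Pi.single j c)
    rw [single_vecMul, ← Finset.univ_sum_single (c • P.row j), map_sum,
      ← Finset.add_sum_erase _ _ (Finset.mem_univ j)] at h0
    rw [← hdiag, ← smul_eq_mul, ← row_apply P j j, ← Pi.smul_apply, eq_neg_of_add_eq_zero_left h0]
    refine neg_mem (Submodule.sum_mem _ fun l hl => ?_)
    rcases lt_or_gt_of_ne (Finset.ne_of_mem_erase hl) with hlj | hjl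
    · exact ih l hlj _
    · simp [hP hjl]
  induction p using Polynomial.induction_on' with
  | add p q hp hq => rw [Pi.single_add, map_add]; exact add_mem hp hq
  | monomial m c =>
    rw [← smul_X_eq_monomial, Pi.single_smul', map_smul]
    refine Submodule.smul_mem _ _ ?_
    by_cases hm : m < d j
    · exact Submodule.subset_span ⟨⟨j, ⟨m, hm⟩⟩, rfl⟩
    · simpa [← pow_add, Nat.sub_add_cancel (not_lt.mp hm)] using hrow (X ^ (m - d j))

theorem range_polarTailMap_eq_span (hP : P.IsLowerTriangular) (hdiag : ∀ j, P j j = X ^ d j) :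
    LinearMap.range (polarTailMap (P.map polyToLaurent')⁻¹)
      = Submodule.span ℂ (Set.range (polarTailBasis (P.map polyToLaurent')⁻¹ d)) := by
  refine le_antisymm ?_ (Submodule.span_le.mpr ?_)
  · rintro _ ⟨v, rfl⟩
    rw [← Finset.univ_sum_single v, map_sum]
    exact Submodule.sum_mem _ fun j _ => polarTailMap_single_mem_span hP hdiag j (v j)
  · rintro _ ⟨jk, rfl⟩
    exact LinearMap.mem_range_self _ _

end LowerTriangular

theorem tyurin_space_dimension_general {n : ℕ} (P : Matrix (Fin n) (Fin n) ℂ[X])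
    (d : Fin n → ℕ)
    (htri : ∀ i j : Fin n, i < j → P i j = 0)
    (hdiag : ∀ j : Fin n, P j j = X ^ d j) :
    {x : Fin n → LaurentSeries ℂ | ∃ v : Fin n → ℂ[X],
        x = fun i => principalPart
          (Matrix.vecMul (fun j => polyToLaurent' (v j)) (P.map polyToLaurent')⁻¹ i)}
      = ↑(Submodule.span ℂ (Set.range fun jk : (j : Fin n) × Fin (d j) =>
          fun i => principalPart
            (HahnSeries.single (jk.2.val : ℤ) (1 : ℂ)
              * (P.map polyToLaurent')⁻¹ jk.1 i))) ∧
    Module.finrank ℂ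
        (Submodule.span ℂ (Set.range fun jk : (j : Fin n) × Fin (d j) =>
          fun i => principalPart
            (HahnSeries.single (jk.2.val : ℤ) (1 : ℂ)
              * (P.map polyToLaurent')⁻¹ jk.1 i)))
      = ∑ j, d j := by
  have hP : P.IsLowerTriangular := fun i j hij => htri i j hij
  have hbasis : (fun jk : (j : Fin n) × Fin (d j) => fun i => principalPart
        (HahnSeries.single (jk.2.val : ℤ) (1 : ℂ) * (P.map polyToLaurent')⁻¹ jk.1 i))
      = polarTailBasis (P.map polyToLaurent')⁻¹ d :=
    funext fun jk => funext fun i => (polarTailMap_single_X_pow_apply _ _ _ _).symm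
  have hrange : {x : Fin n → LaurentSeries ℂ | ∃ v : Fin n → ℂ[X], x = fun i => principalPart
        (Matrix.vecMul (fun j => polyToLaurent' (v j)) (P.map polyToLaurent')⁻¹ i)}
      = LinearMap.range (polarTailMap (P.map polyToLaurent')⁻¹) :=
    Set.ext fun _ => exists_congr fun _ => eq_comm
  have hindep := linearIndependent_polarTailBasis (isLowerTriangular_map_polyToLaurent' hP).inv
    (inv_map_polyToLaurent'_apply_self hP hdiag)
  rw [hbasis, hrange, range_polarTailMap_eq_span hP hdiag, finrank_span_eq_card hindep]
  simp

/-- Localized Tyurin space: for `P` lower triangular with diagonal `z^{d_j}`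
and strictly-lower entries of degree `< d_j` in row `j`, the space of
principal parts of `vᵗ P⁻¹` (for polynomial row vectors `v`) is spanned by the
principal parts of `z^k e_jᵗ P⁻¹` (`0 ≤ k ≤ d_j − 1`) and has dimension
exactly `∑ d_j = deg det P`. -/
theorem tyurin_space_dimension {n : ℕ} (P : Matrix (Fin n) (Fin n) ℂ[X])
    (d : Fin n → ℕ)
    (htri : ∀ i j : Fin n, i < j → P i j = 0)
    (hdiag : ∀ j : Fin n, P j j = X ^ d j)
    (hlow : ∀ j k : Fin n, k < j → (P j k).degree < (d j : ℕ)) :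
    {x : Fin n → LaurentSeries ℂ | ∃ v : Fin n → ℂ[X],
        x = fun i => principalPart
          (Matrix.vecMul (fun j => polyToLaurent' (v j)) (P.map polyToLaurent')⁻¹ i)}
      = ↑(Submodule.span ℂ (Set.range fun jk : (j : Fin n) × Fin (d j) =>
          fun i => principalPart
            (HahnSeries.single (jk.2.val : ℤ) (1 : ℂ)
              * (P.map polyToLaurent')⁻¹ jk.1 i))) ∧
    Module.finrank ℂ
        (Submodule.span ℂ (Set.range fun jk : (j : Fin n) × Fin (d j) =>
          fun i => principalPart
            (HahnSeries.single (jk.2.val : ℤ) (1 : ℂ)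
              * (P.map polyToLaurent')⁻¹ jk.1 i)))
      = ∑ j, d j :=
  tyurin_space_dimension_general P d htri hdiag
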